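/- arXiv:2604.06936 — 2 statements merged into one kernel-verified Lean document; each statement's English description precedes it below -/
import Mathlib

section
/- Under the stochastic optimal control setup with weight function w, let 𝔓(P̂,r̂) and 𝔓(P̃,r̃) be nonempty box ambiguity sets with robust Bellman fixed points V̂* and Ṽ*, and fix s̄ ∈ S. Suppose the second-order growth condition holds at Â*(s̄): there is ν > 0 such that sup_{Q∈𝔓(P̂,r̂)} E_Q[C(s̄,a,ξ) + γ V̂*(g(s̄,a,ξ))] ≥ V̂*(s̄) + ν · d_E(a, Â*(s̄))^2 for all a ∈ A, where Â*(s̄) := argmin_{a∈A} sup_{Q∈𝔓(P̂,r̂)} E_Q[C(s̄,a,ξ) + γ V̂*(g(s̄,a,ξ))]. Then, with Ã*(s̄) the corresponding optimal action set for (P̃,r̃), D(Ã*(s̄), Â*(s̄); d_E) ≤ sqrt( (3 C̄_w w(s̄) / (ν (1 − γ_w)^2)) · H(𝔓(P̂,r̂), 𝔓(P̃,r̃); d_TV) ). -/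
open Filter Topology

noncomputable section

/-- Box-type ambiguity set `𝔓(P,r) = {Q ∈ Δ_J : P_j - r_j ≤ Q_j ≤ P_j + r_j ∀ j}`. -/
def boxSet (J : ℕ) (P r : Fin J → ℝ) : Set (Fin J → ℝ) :=
  {Q | Q ∈ stdSimplex ℝ (Fin J) ∧ ∀ j, P j - r j ≤ Q j ∧ Q j ≤ P j + r j}

/-- Expectation of `h` under the probability vector `Q`. -/
def expec {J : ℕ} (Q h : Fin J → ℝ) : ℝ := ∑ j, Q j * h j

/-- Weighted sup norm `‖V‖_w = sup_{s ∈ S} |V s| / w s`. -/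
noncomputable def wSupNorm {m : ℕ} (S : Set (Fin m → ℝ)) (w V : (Fin m → ℝ) → ℝ) : ℝ :=
  ⨆ s : S, |V (s : Fin m → ℝ)| / w (s : Fin m → ℝ)

/-- Distributionally robust Bellman operator. -/
noncomputable def robustBellman {J m n : ℕ} (A : Set (Fin n → ℝ)) (amb : Set (Fin J → ℝ))
    (C : (Fin m → ℝ) → (Fin n → ℝ) → Fin J → ℝ)
    (g : (Fin m → ℝ) → (Fin n → ℝ) → Fin J → Fin m → ℝ)
    (γ : ℝ) (V : (Fin m → ℝ) → ℝ) (s : Fin m → ℝ) : ℝ :=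
  ⨅ a : A, ⨆ Q : amb,
    expec (Q : Fin J → ℝ) (fun j => C s (a : Fin n → ℝ) j + γ * V (g s (a : Fin n → ℝ) j))

/-- True Bellman operator under the distribution `Pc`. -/
noncomputable def trueBellman {J m n : ℕ} (A : Set (Fin n → ℝ)) (Pc : Fin J → ℝ)
    (C : (Fin m → ℝ) → (Fin n → ℝ) → Fin J → ℝ)
    (g : (Fin m → ℝ) → (Fin n → ℝ) → Fin J → Fin m → ℝ)
    (γ : ℝ) (V : (Fin m → ℝ) → ℝ) (s : Fin m → ℝ) : ℝ :=
  ⨅ a : A, expec Pc (fun j => C s (a : Fin n → ℝ) j + γ * V (g s (a : Fin n → ℝ) j))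

/-- Policy-evaluation Bellman operator under the distribution `Pc`. -/
noncomputable def policyBellman {J m n : ℕ} (Pc : Fin J → ℝ)
    (C : (Fin m → ℝ) → (Fin n → ℝ) → Fin J → ℝ)
    (g : (Fin m → ℝ) → (Fin n → ℝ) → Fin J → Fin m → ℝ)
    (π : (Fin m → ℝ) → (Fin n → ℝ))
    (γ : ℝ) (V : (Fin m → ℝ) → ℝ) (s : Fin m → ℝ) : ℝ :=
  expec Pc (fun j => C s (π s) j + γ * V (g s (π s) j))

/-- Pseudometric with ζ-structure: `d_G(P,Q) = sup_{g ∈ G} |E_P[g] - E_Q[g]|`. -/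
noncomputable def dzeta {J : ℕ} (G : Set (Fin J → ℝ)) (P Q : Fin J → ℝ) : ℝ :=
  ⨆ g : G, |expec P (g : Fin J → ℝ) - expec Q (g : Fin J → ℝ)|

/-- Total variation distance on probability vectors. -/
noncomputable def dTV {J : ℕ} (P Q : Fin J → ℝ) : ℝ := ∑ j, |P j - Q j|

/-- Excess (deviation) of `A` over `B` with respect to a (pseudo)metric `d`. -/
noncomputable def excessD {α : Type*} (d : α → α → ℝ) (A B : Set α) : ℝ :=
  ⨆ x : A, ⨅ y : B, d (x : α) (y : α)

/-- Hausdorff distance with respect to a (pseudo)metric `d`. -/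
noncomputable def hausD {α : Type*} (d : α → α → ℝ) (A B : Set α) : ℝ :=
  max (excessD d A B) (excessD d B A)

/-- Euclidean distance on `ℝ^d`. -/
noncomputable def eDist {d : ℕ} (x y : Fin d → ℝ) : ℝ :=
  Real.sqrt (∑ i, (x i - y i) ^ 2)

/-- Euclidean distance from a point to a set. -/
def eDistSet {d : ℕ} (x : Fin d → ℝ) (B : Set (Fin d → ℝ)) : ℝ :=
  ⨅ b : B, eDist x (b : Fin d → ℝ)

/-! Both fixed points are bounded by `N w` with `N = C̄ / (1 - γκ)`: a bound `|V| ≤ c w`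
improves to `|V| ≤ (C̄ + γκc) w`, whose fixed point is `N`. The robust Q-value
`sup_Q E_Q[C + γ V ∘ g]` moves by at most `γκc w` when `V` moves by `c w`, and by at most
`N w H` when the box set moves by `H` in the `d_TV`-Hausdorff distance, because the expectation of
a function bounded by `N w` is `N w`-Lipschitz in `d_TV`. The same self-improvement then gives
`|V̂ - Ṽ| ≤ E w` and `|Q̂ - Q̃| ≤ E w` with `E = C̄ H / (1 - γκ)²`. For `a ∈ Ã*(s̄)` we have
`Q̃(s̄, a) = Ṽ(s̄)`, so the growth condition gives `ν d(a, Â*)² ≤ Q̂(s̄, a) - V̂(s̄) ≤ 2 E w(s̄)`. -/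

section Suprema

variable {ι : Type*} [Nonempty ι] {f f' : ι → ℝ} {c : ℝ}

lemma abs_ciSup_le (h : ∀ i, |f i| ≤ c) : |⨆ i, f i| ≤ c := by
  have hbdd : BddAbove (Set.range f) := ⟨c, by rintro _ ⟨i, rfl⟩; exact (abs_le.1 (h i)).2⟩
  obtain ⟨i⟩ := ‹Nonempty ι›
  exact abs_le.2 ⟨(abs_le.1 (h i)).1.trans (le_ciSup hbdd i), ciSup_le fun i => (abs_le.1 (h i)).2⟩

lemma abs_ciInf_le (h : ∀ i, |f i| ≤ c) : |⨅ i, f i| ≤ c := by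
  have hbdd : BddBelow (Set.range f) := ⟨-c, by rintro _ ⟨i, rfl⟩; exact (abs_le.1 (h i)).1⟩
  obtain ⟨i⟩ := ‹Nonempty ι›
  exact abs_le.2 ⟨le_ciInf fun i => (abs_le.1 (h i)).1, (ciInf_le hbdd i).trans (abs_le.1 (h i)).2⟩

lemma abs_ciSup_sub_ciSup_le (hf : BddAbove (Set.range f)) (hf' : BddAbove (Set.range f'))
    (h : ∀ i, |f i - f' i| ≤ c) : |(⨆ i, f i) - ⨆ i, f' i| ≤ c := by
  refine abs_sub_le_iff.2 ⟨sub_le_iff_le_add.2 (ciSup_le fun i => ?_),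
    sub_le_iff_le_add.2 (ciSup_le fun i => ?_)⟩
  · linarith [le_ciSup hf' i, (abs_sub_le_iff.1 (h i)).1]
  · linarith [le_ciSup hf i, (abs_sub_le_iff.1 (h i)).2]

lemma abs_ciInf_sub_ciInf_le (hf : BddBelow (Set.range f)) (hf' : BddBelow (Set.range f'))
    (h : ∀ i, |f i - f' i| ≤ c) : |(⨅ i, f i) - ⨅ i, f' i| ≤ c := by
  have h₁ : (⨅ i, f i) - c ≤ ⨅ i, f' i :=
    le_ciInf fun i => by linarith [ciInf_le hf i, (abs_sub_le_iff.1 (h i)).1]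
  have h₂ : (⨅ i, f' i) - c ≤ ⨅ i, f i :=
    le_ciInf fun i => by linarith [ciInf_le hf' i, (abs_sub_le_iff.1 (h i)).2]
  exact abs_sub_le_iff.2 ⟨by linarith, by linarith⟩

end Suprema

section Excess

variable {α : Type*} {d : α → α → ℝ} {X Y T : Set α} {K L : ℝ} {f : α → ℝ}

lemma ciInf_le_excessD (hd : ∀ x y, 0 ≤ d x y) (hK : ∀ x ∈ X, ∀ y ∈ Y, d x y ≤ K)
    (hY : Y.Nonempty) {x : α} (hx : x ∈ X) : ⨅ y : Y, d x y ≤ excessD d X Y := by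
  obtain ⟨y₀, hy₀⟩ := hY
  refine le_ciSup (f := fun x : X => ⨅ y : Y, d x y) ⟨K, ?_⟩ ⟨x, hx⟩
  rintro _ ⟨x', rfl⟩
  exact (ciInf_le ⟨0, by rintro _ ⟨y, rfl⟩; exact hd _ _⟩ ⟨y₀, hy₀⟩).trans (hK x' x'.2 y₀ hy₀)

lemma ciSup_le_ciSup_add_mul_excessD (hd : ∀ x y, 0 ≤ d x y)
    (hK : ∀ x ∈ X, ∀ y ∈ Y, d x y ≤ K) (hX : X.Nonempty) (hY : Y.Nonempty)
    (hf : BddAbove (Set.range fun y : Y => f y)) (hL : 0 ≤ L)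
    (hlip : ∀ x y, f x ≤ f y + L * d x y) :
    ⨆ x : X, f x ≤ (⨆ y : Y, f y) + L * excessD d X Y := by
  have := hX.to_subtype
  have := hY.to_subtype
  refine ciSup_le fun x => ?_
  have hinf : f x - ⨆ y : Y, f y ≤ L * ⨅ y : Y, d x y := by
    rw [Real.mul_iInf_of_nonneg hL]
    exact le_ciInf fun y => by linarith [hlip x y, le_ciSup hf y]
  have hexc := mul_le_mul_of_nonneg_left (ciInf_le_excessD hd hK hY x.2) hL
  linarith

lemma abs_ciSup_sub_ciSup_le_mul_hausD (hd : ∀ x y, 0 ≤ d x y)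
    (hK : ∀ x ∈ T, ∀ y ∈ T, d x y ≤ K) (hXT : X ⊆ T) (hYT : Y ⊆ T)
    (hX : X.Nonempty) (hY : Y.Nonempty) (hfX : BddAbove (Set.range fun x : X => f x))
    (hfY : BddAbove (Set.range fun y : Y => f y)) (hL : 0 ≤ L)
    (hlip : ∀ x y, |f x - f y| ≤ L * d x y) :
    |(⨆ x : X, f x) - ⨆ y : Y, f y| ≤ L * hausD d X Y := by
  have hXY := ciSup_le_ciSup_add_mul_excessD hd (fun x hx y hy => hK x (hXT hx) y (hYT hy))
    hX hY hfY hL fun x y => by linarith [(abs_le.1 (hlip x y)).2]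
  have hYX := ciSup_le_ciSup_add_mul_excessD hd (fun x hx y hy => hK x (hYT hx) y (hXT hy))
    hY hX hfX hL fun x y => by linarith [(abs_le.1 (hlip x y)).2]
  have h₁ := mul_le_mul_of_nonneg_left (le_max_left (excessD d X Y) (excessD d Y X)) hL
  have h₂ := mul_le_mul_of_nonneg_left (le_max_right (excessD d X Y) (excessD d Y X)) hL
  exact abs_sub_le_iff.2 ⟨by unfold hausD; linarith, by unfold hausD; linarith⟩

lemma hausD_nonneg (hd : ∀ x y, 0 ≤ d x y) : 0 ≤ hausD d X Y :=
  le_max_of_le_left <| Real.iSup_nonneg fun _ => Real.iInf_nonneg fun _ => hd _ _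

end Excess

section ProbabilityVectors

variable {J : ℕ} {P Q h h' : Fin J → ℝ} {B : ℝ}

lemma abs_expec_le (hQ : Q ∈ stdSimplex ℝ (Fin J)) (hB : ∀ j, |h j| ≤ B) : |expec Q h| ≤ B :=
  calc |expec Q h| ≤ ∑ j, |Q j * h j| := Finset.abs_sum_le_sum_abs _ _
    _ ≤ ∑ j, Q j * B := Finset.sum_le_sum fun j _ => by
        rw [abs_mul, abs_of_nonneg (hQ.1 j)]; exact mul_le_mul_of_nonneg_left (hB j) (hQ.1 j)
    _ = B := by rw [← Finset.sum_mul, hQ.2, one_mul]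

lemma expec_sub_expec : expec Q h - expec Q h' = expec Q (fun j => h j - h' j) := by
  simp only [expec, mul_sub, Finset.sum_sub_distrib]

lemma abs_expec_sub_expec_le (hB : ∀ j, |h j| ≤ B) : |expec P h - expec Q h| ≤ B * dTV P Q :=
  calc |expec P h - expec Q h| = |∑ j, (P j - Q j) * h j| := by
        simp only [expec, sub_mul, Finset.sum_sub_distrib]
    _ ≤ ∑ j, |P j - Q j| * B := (Finset.abs_sum_le_sum_abs _ _).trans <|
        Finset.sum_le_sum fun j _ => by
          rw [abs_mul]; exact mul_le_mul_of_nonneg_left (hB j) (abs_nonneg _)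
    _ = B * dTV P Q := by rw [← Finset.sum_mul, mul_comm]; rfl

lemma dTV_nonneg (P Q : Fin J → ℝ) : 0 ≤ dTV P Q :=
  Finset.sum_nonneg fun _ _ => abs_nonneg _

lemma dTV_le_two (hP : P ∈ stdSimplex ℝ (Fin J)) (hQ : Q ∈ stdSimplex ℝ (Fin J)) :
    dTV P Q ≤ 2 :=
  calc dTV P Q ≤ ∑ j, (P j + Q j) := Finset.sum_le_sum fun j _ =>
        (abs_sub _ _).trans_eq (by rw [abs_of_nonneg (hP.1 j), abs_of_nonneg (hQ.1 j)])
    _ = 2 := by rw [Finset.sum_add_distrib, hP.2, hQ.2]; norm_num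

lemma bddAbove_range_expec {T : Set (Fin J → ℝ)} (hT : T ⊆ stdSimplex ℝ (Fin J))
    (hB : ∀ j, |h j| ≤ B) : BddAbove (Set.range fun Q : T => expec (Q : Fin J → ℝ) h) :=
  ⟨B, by rintro _ ⟨Q, rfl⟩; exact (abs_le.1 (abs_expec_le (hT Q.2) hB)).2⟩

lemma abs_ciSup_expec_sub_ciSup_expec_le {T T' : Set (Fin J → ℝ)}
    (hT : T ⊆ stdSimplex ℝ (Fin J)) (hT' : T' ⊆ stdSimplex ℝ (Fin J))
    (hTne : T.Nonempty) (hT'ne : T'.Nonempty) (hB₀ : 0 ≤ B) (hB : ∀ j, |h j| ≤ B) :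
    |(⨆ Q : T, expec (Q : Fin J → ℝ) h) - ⨆ Q : T', expec (Q : Fin J → ℝ) h| ≤
      B * hausD dTV T T' :=
  abs_ciSup_sub_ciSup_le_mul_hausD dTV_nonneg (fun _ hP _ hQ => dTV_le_two hP hQ) hT hT'
    hTne hT'ne (bddAbove_range_expec hT hB) (bddAbove_range_expec hT' hB) hB₀
    fun _ _ => abs_expec_sub_expec_le hB

end ProbabilityVectors

section WeightedNorm

variable {m : ℕ} {S : Set (Fin m → ℝ)} {w V : (Fin m → ℝ) → ℝ} {a b c : ℝ}

lemma wSupNorm_nonneg (hw : ∀ s ∈ S, 0 < w s) : 0 ≤ wSupNorm S w V :=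
  Real.iSup_nonneg fun s => div_nonneg (abs_nonneg _) (hw s s.2).le

lemma wSupNorm_le (hw : ∀ s ∈ S, 0 < w s) (hc : 0 ≤ c) (hV : ∀ s ∈ S, |V s| ≤ c * w s) :
    wSupNorm S w V ≤ c :=
  Real.iSup_le (fun s => (div_le_iff₀ (hw s s.2)).2 (hV s s.2)) hc

lemma abs_le_wSupNorm_mul (hw : ∀ s ∈ S, 0 < w s) (hV : ∃ M, ∀ s ∈ S, |V s| ≤ M * w s)
    {s : Fin m → ℝ} (hs : s ∈ S) : |V s| ≤ wSupNorm S w V * w s := by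
  obtain ⟨M, hM⟩ := hV
  have hbdd : BddAbove (Set.range fun t : S => |V t| / w t) :=
    ⟨M, by rintro _ ⟨t, rfl⟩; exact (div_le_iff₀ (hw t t.2)).2 (hM t t.2)⟩
  exact (div_le_iff₀ (hw s hs)).1 (le_ciSup hbdd ⟨s, hs⟩)

lemma abs_le_div_one_sub_mul_of_affine_bound (hw : ∀ s ∈ S, 0 < w s)
    (hV : ∃ M, ∀ s ∈ S, |V s| ≤ M * w s) (ha : 0 ≤ a) (hb₀ : 0 ≤ b) (hb₁ : b < 1)
    (h : ∀ c, 0 ≤ c → (∀ s ∈ S, |V s| ≤ c * w s) → ∀ s ∈ S, |V s| ≤ (a + b * c) * w s) :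
    ∀ s ∈ S, |V s| ≤ a / (1 - b) * w s := by
  set c := wSupNorm S w V
  have hc₀ : 0 ≤ c := wSupNorm_nonneg hw
  have hc : ∀ s ∈ S, |V s| ≤ c * w s := fun s hs => abs_le_wSupNorm_mul hw hV hs
  have hself : c ≤ a + b * c := wSupNorm_le hw (by positivity) (h c hc₀ hc)
  have hfix : c ≤ a / (1 - b) := by rw [le_div_iff₀ (by linarith)]; linarith
  exact fun s hs => (hc s hs).trans (mul_le_mul_of_nonneg_right hfix (hw s hs).le)

end WeightedNorm

section RobustControl

variable {J m n : ℕ} {S : Set (Fin m → ℝ)} {A : Set (Fin n → ℝ)}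
  {C : (Fin m → ℝ) → (Fin n → ℝ) → Fin J → ℝ} {g : (Fin m → ℝ) → (Fin n → ℝ) → Fin J → Fin m → ℝ}
  {w : (Fin m → ℝ) → ℝ} {Cbar κ γ : ℝ}

structure WeightedBounds (S : Set (Fin m → ℝ)) (A : Set (Fin n → ℝ))
    (C : (Fin m → ℝ) → (Fin n → ℝ) → Fin J → ℝ)
    (g : (Fin m → ℝ) → (Fin n → ℝ) → Fin J → Fin m → ℝ)
    (w : (Fin m → ℝ) → ℝ) (Cbar κ : ℝ) : Prop where
  one_le_weight : ∀ s ∈ S, 1 ≤ w s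
  abs_cost_le : ∀ s ∈ S, ∀ a ∈ A, ∀ j, |C s a j| ≤ Cbar * w s
  weight_next_le : ∀ s ∈ S, ∀ a ∈ A, ∀ j, w (g s a j) ≤ κ * w s
  next_mem : ∀ s ∈ S, ∀ a ∈ A, ∀ j, g s a j ∈ S

def robustQValue (amb : Set (Fin J → ℝ)) (C : (Fin m → ℝ) → (Fin n → ℝ) → Fin J → ℝ)
    (g : (Fin m → ℝ) → (Fin n → ℝ) → Fin J → Fin m → ℝ) (γ : ℝ) (V : (Fin m → ℝ) → ℝ)
    (s : Fin m → ℝ) (a : Fin n → ℝ) : ℝ :=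
  ⨆ Q : amb, expec (Q : Fin J → ℝ) (fun j => C s a j + γ * V (g s a j))

lemma robustBellman_eq_iInf_robustQValue (amb : Set (Fin J → ℝ)) (V : (Fin m → ℝ) → ℝ)
    (s : Fin m → ℝ) :
    robustBellman A amb C g γ V s = ⨅ a : A, robustQValue amb C g γ V s a :=
  rfl

structure IsWeightedFixedPt (S : Set (Fin m → ℝ)) (A : Set (Fin n → ℝ)) (amb : Set (Fin J → ℝ))
    (C : (Fin m → ℝ) → (Fin n → ℝ) → Fin J → ℝ)
    (g : (Fin m → ℝ) → (Fin n → ℝ) → Fin J → Fin m → ℝ) (γ : ℝ) (w V : (Fin m → ℝ) → ℝ) :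
    Prop where
  bounded : ∃ M, ∀ s ∈ S, |V s| ≤ M * w s
  eq_robustBellman : ∀ s ∈ S, V s = robustBellman A amb C g γ V s

namespace WeightedBounds

variable {amb amb' : Set (Fin J → ℝ)} {V V' : (Fin m → ℝ) → ℝ} {c M : ℝ}
  {s : Fin m → ℝ} {a : Fin n → ℝ}

lemma weight_pos (hW : WeightedBounds S A C g w Cbar κ) (hs : s ∈ S) : 0 < w s :=
  zero_lt_one.trans_le (hW.one_le_weight s hs)

lemma abs_cost_add_le (hW : WeightedBounds S A C g w Cbar κ) (hγ : 0 ≤ γ) (hc : 0 ≤ c)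
    (hV : ∀ s ∈ S, |V s| ≤ c * w s) (hs : s ∈ S) (ha : a ∈ A) (j : Fin J) :
    |C s a j + γ * V (g s a j)| ≤ (Cbar + γ * κ * c) * w s :=
  calc |C s a j + γ * V (g s a j)| ≤ |C s a j| + γ * |V (g s a j)| :=
        (abs_add_le _ _).trans_eq (by rw [abs_mul, abs_of_nonneg hγ])
    _ ≤ Cbar * w s + γ * (c * (κ * w s)) := by
        gcongr
        · exact hW.abs_cost_le s hs a ha j
        · exact (hV _ (hW.next_mem s hs a ha j)).trans
            (mul_le_mul_of_nonneg_left (hW.weight_next_le s hs a ha j) hc)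
    _ = (Cbar + γ * κ * c) * w s := by ring

lemma bddAbove_range_expec_cost_add (hW : WeightedBounds S A C g w Cbar κ)
    (hamb : amb ⊆ stdSimplex ℝ (Fin J)) (hγ : 0 ≤ γ) (hc : 0 ≤ c)
    (hV : ∀ s ∈ S, |V s| ≤ c * w s) (hs : s ∈ S) (ha : a ∈ A) :
    BddAbove (Set.range fun Q : amb =>
      expec (Q : Fin J → ℝ) (fun j => C s a j + γ * V (g s a j))) :=
  bddAbove_range_expec hamb (hW.abs_cost_add_le hγ hc hV hs ha)

lemma abs_robustQValue_le (hW : WeightedBounds S A C g w Cbar κ) (hamb : amb ⊆ stdSimplex ℝ (Fin J))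
    (hambne : amb.Nonempty) (hγ : 0 ≤ γ) (hc : 0 ≤ c) (hV : ∀ s ∈ S, |V s| ≤ c * w s)
    (hs : s ∈ S) (ha : a ∈ A) : |robustQValue amb C g γ V s a| ≤ (Cbar + γ * κ * c) * w s :=
  have := hambne.to_subtype
  abs_ciSup_le fun Q => abs_expec_le (hamb Q.2) (hW.abs_cost_add_le hγ hc hV hs ha)

lemma bddBelow_range_robustQValue (hW : WeightedBounds S A C g w Cbar κ)
    (hamb : amb ⊆ stdSimplex ℝ (Fin J)) (hambne : amb.Nonempty) (hγ : 0 ≤ γ) (hc : 0 ≤ c)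
    (hV : ∀ s ∈ S, |V s| ≤ c * w s) (hs : s ∈ S) :
    BddBelow (Set.range fun a : A => robustQValue amb C g γ V s a) :=
  ⟨-((Cbar + γ * κ * c) * w s), by
    rintro _ ⟨a, rfl⟩; exact (abs_le.1 (hW.abs_robustQValue_le hamb hambne hγ hc hV hs a.2)).1⟩

lemma abs_robustQValue_sub_robustQValue_le_of_abs_sub_le (hW : WeightedBounds S A C g w Cbar κ)
    (hamb : amb ⊆ stdSimplex ℝ (Fin J)) (hambne : amb.Nonempty) (hγ : 0 ≤ γ) (hM : 0 ≤ M)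
    (hV : ∀ s ∈ S, |V s| ≤ M * w s) (hV' : ∀ s ∈ S, |V' s| ≤ M * w s) (hc : 0 ≤ c)
    (hVV' : ∀ s ∈ S, |V s - V' s| ≤ c * w s) (hs : s ∈ S) (ha : a ∈ A) :
    |robustQValue amb C g γ V s a - robustQValue amb C g γ V' s a| ≤ γ * κ * c * w s := by
  have := hambne.to_subtype
  refine abs_ciSup_sub_ciSup_le (hW.bddAbove_range_expec_cost_add hamb hγ hM hV hs ha)
    (hW.bddAbove_range_expec_cost_add hamb hγ hM hV' hs ha) fun Q => ?_
  rw [expec_sub_expec]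
  refine abs_expec_le (hamb Q.2) fun j => ?_
  calc |C s a j + γ * V (g s a j) - (C s a j + γ * V' (g s a j))|
      = γ * |V (g s a j) - V' (g s a j)| := by
        rw [add_sub_add_left_eq_sub, ← mul_sub, abs_mul, abs_of_nonneg hγ]
    _ ≤ γ * (c * (κ * w s)) := by
        gcongr
        exact (hVV' _ (hW.next_mem s hs a ha j)).trans
          (mul_le_mul_of_nonneg_left (hW.weight_next_le s hs a ha j) hc)
    _ = γ * κ * c * w s := by ring

lemma abs_robustQValue_sub_robustQValue_le_mul_hausD (hW : WeightedBounds S A C g w Cbar κ)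
    (hamb : amb ⊆ stdSimplex ℝ (Fin J)) (hamb' : amb' ⊆ stdSimplex ℝ (Fin J))
    (hambne : amb.Nonempty) (hambne' : amb'.Nonempty) (hCbar : 0 ≤ Cbar) (hκ : 0 ≤ κ)
    (hγ : 0 ≤ γ) (hc : 0 ≤ c) (hV : ∀ s ∈ S, |V s| ≤ c * w s) (hs : s ∈ S) (ha : a ∈ A) :
    |robustQValue amb C g γ V s a - robustQValue amb' C g γ V s a| ≤
      (Cbar + γ * κ * c) * w s * hausD dTV amb amb' :=
  abs_ciSup_expec_sub_ciSup_expec_le hamb hamb' hambne hambne'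
    (mul_nonneg (by positivity) (hW.weight_pos hs).le) (hW.abs_cost_add_le hγ hc hV hs ha)

lemma abs_le_of_isWeightedFixedPt (hW : WeightedBounds S A C g w Cbar κ) (hA : A.Nonempty)
    (hamb : amb ⊆ stdSimplex ℝ (Fin J)) (hambne : amb.Nonempty) (hCbar : 0 ≤ Cbar)
    (hγ : 0 ≤ γ) (hκ : 0 ≤ κ) (hγκ : γ * κ < 1) (hfix : IsWeightedFixedPt S A amb C g γ w V) :
    ∀ s ∈ S, |V s| ≤ Cbar / (1 - γ * κ) * w s := by
  have := hA.to_subtype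
  refine abs_le_div_one_sub_mul_of_affine_bound (fun s => hW.weight_pos) hfix.bounded hCbar
    (mul_nonneg hγ hκ) hγκ fun c hc hV s hs => ?_
  rw [hfix.eq_robustBellman s hs, robustBellman_eq_iInf_robustQValue]
  exact abs_ciInf_le fun a => hW.abs_robustQValue_le hamb hambne hγ hc hV hs a.2

lemma abs_robustQValue_sub_robustQValue_le_add_mul (hW : WeightedBounds S A C g w Cbar κ)
    (hA : A.Nonempty) (hamb : amb ⊆ stdSimplex ℝ (Fin J)) (hamb' : amb' ⊆ stdSimplex ℝ (Fin J))
    (hambne : amb.Nonempty) (hambne' : amb'.Nonempty) (hCbar : 0 ≤ Cbar) (hγ : 0 ≤ γ)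
    (hκ : 0 ≤ κ) (hγκ : γ * κ < 1) (hfix : IsWeightedFixedPt S A amb C g γ w V)
    (hfix' : IsWeightedFixedPt S A amb' C g γ w V') (hc : 0 ≤ c)
    (hVV' : ∀ s ∈ S, |V s - V' s| ≤ c * w s) (hs : s ∈ S) (ha : a ∈ A) :
    |robustQValue amb C g γ V s a - robustQValue amb' C g γ V' s a| ≤
      (Cbar / (1 - γ * κ) * hausD dTV amb amb' + γ * κ * c) * w s := by
  set N := Cbar / (1 - γ * κ)
  have hN : 0 ≤ N := div_nonneg hCbar (by linarith)
  have hNfix : Cbar + γ * κ * N = N := by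
    simp only [N]; field_simp [(by linarith : (1 - γ * κ) ≠ 0)]; ring
  have hV := hW.abs_le_of_isWeightedFixedPt hA hamb hambne hCbar hγ hκ hγκ hfix
  have hV' := hW.abs_le_of_isWeightedFixedPt hA hamb' hambne' hCbar hγ hκ hγκ hfix'
  have hvalue := hW.abs_robustQValue_sub_robustQValue_le_of_abs_sub_le hamb hambne hγ hN hV hV'
    hc hVV' hs ha
  have hambiguity := hW.abs_robustQValue_sub_robustQValue_le_mul_hausD hamb hamb' hambne
    hambne' hCbar hκ hγ hN hV' hs ha
  rw [hNfix] at hambiguity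
  calc _ ≤ |robustQValue amb C g γ V s a - robustQValue amb C g γ V' s a| +
        |robustQValue amb C g γ V' s a - robustQValue amb' C g γ V' s a| := abs_sub_le _ _ _
    _ ≤ γ * κ * c * w s + N * w s * hausD dTV amb amb' := add_le_add hvalue hambiguity
    _ = (N * hausD dTV amb amb' + γ * κ * c) * w s := by ring

lemma abs_sub_le_of_isWeightedFixedPt (hW : WeightedBounds S A C g w Cbar κ)
    (hA : A.Nonempty) (hamb : amb ⊆ stdSimplex ℝ (Fin J)) (hamb' : amb' ⊆ stdSimplex ℝ (Fin J))
    (hambne : amb.Nonempty) (hambne' : amb'.Nonempty) (hCbar : 0 ≤ Cbar) (hγ : 0 ≤ γ)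
    (hκ : 0 ≤ κ) (hγκ : γ * κ < 1) (hfix : IsWeightedFixedPt S A amb C g γ w V)
    (hfix' : IsWeightedFixedPt S A amb' C g γ w V') :
    ∀ s ∈ S, |V s - V' s| ≤ Cbar * hausD dTV amb amb' / (1 - γ * κ) ^ 2 * w s := by
  have := hA.to_subtype
  set N := Cbar / (1 - γ * κ)
  have hN : 0 ≤ N := div_nonneg hCbar (by linarith)
  have hV := hW.abs_le_of_isWeightedFixedPt hA hamb hambne hCbar hγ hκ hγκ hfix
  have hV' := hW.abs_le_of_isWeightedFixedPt hA hamb' hambne' hCbar hγ hκ hγκ hfix'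
  have hbdd : ∃ M, ∀ s ∈ S, |V s - V' s| ≤ M * w s :=
    ⟨N + N, fun s hs => (abs_sub _ _).trans (by linarith [hV s hs, hV' s hs])⟩
  have key := abs_le_div_one_sub_mul_of_affine_bound (fun s => hW.weight_pos) hbdd
    (mul_nonneg hN (hausD_nonneg dTV_nonneg)) (mul_nonneg hγ hκ) hγκ fun c hc hVV' s hs => by
      rw [hfix.eq_robustBellman s hs, hfix'.eq_robustBellman s hs,
        robustBellman_eq_iInf_robustQValue, robustBellman_eq_iInf_robustQValue]
      exact abs_ciInf_sub_ciInf_le (hW.bddBelow_range_robustQValue hamb hambne hγ hN hV hs)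
        (hW.bddBelow_range_robustQValue hamb' hambne' hγ hN hV' hs) fun a =>
        hW.abs_robustQValue_sub_robustQValue_le_add_mul hA hamb hamb' hambne hambne' hCbar hγ hκ
          hγκ hfix hfix' hc hVV' hs a.2
  intro s hs
  convert key s hs using 2
  simp only [N, sq, div_mul_eq_mul_div, div_div]

lemma abs_robustQValue_sub_robustQValue_le_of_isWeightedFixedPt
    (hW : WeightedBounds S A C g w Cbar κ)
    (hA : A.Nonempty) (hamb : amb ⊆ stdSimplex ℝ (Fin J)) (hamb' : amb' ⊆ stdSimplex ℝ (Fin J))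
    (hambne : amb.Nonempty) (hambne' : amb'.Nonempty) (hCbar : 0 ≤ Cbar) (hγ : 0 ≤ γ)
    (hκ : 0 ≤ κ) (hγκ : γ * κ < 1) (hfix : IsWeightedFixedPt S A amb C g γ w V)
    (hfix' : IsWeightedFixedPt S A amb' C g γ w V') (hs : s ∈ S) (ha : a ∈ A) :
    |robustQValue amb C g γ V s a - robustQValue amb' C g γ V' s a| ≤
      Cbar * hausD dTV amb amb' / (1 - γ * κ) ^ 2 * w s := by
  have hE : 0 ≤ Cbar * hausD dTV amb amb' / (1 - γ * κ) ^ 2 :=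
    div_nonneg (mul_nonneg hCbar (hausD_nonneg dTV_nonneg)) (sq_nonneg _)
  convert hW.abs_robustQValue_sub_robustQValue_le_add_mul hA hamb hamb' hambne hambne' hCbar hγ
    hκ hγκ hfix hfix' hE (hW.abs_sub_le_of_isWeightedFixedPt hA hamb hamb' hambne hambne' hCbar
      hγ hκ hγκ hfix hfix') hs ha using 2
  field_simp [(by linarith : (1 - γ * κ) ≠ 0)]
  ring

end WeightedBounds

end RobustControl

theorem robust_policy_stability_quantitative_general
    (J m n : ℕ)
    (S : Set (Fin m → ℝ))
    (A : Set (Fin n → ℝ)) (hA : A.Nonempty)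
    (C : (Fin m → ℝ) → (Fin n → ℝ) → Fin J → ℝ)
    (g : (Fin m → ℝ) → (Fin n → ℝ) → Fin J → Fin m → ℝ)
    (hgS : ∀ s ∈ S, ∀ a ∈ A, ∀ j, g s a j ∈ S)
    (γ : ℝ) (hγ0 : 0 ≤ γ)
    (w : (Fin m → ℝ) → ℝ) (hw1 : ∀ s ∈ S, 1 ≤ w s)
    (Cbar κ : ℝ) (hCbar0 : 0 < Cbar) (hκ0 : 0 ≤ κ)
    (hCb : ∀ s ∈ S, ∀ a ∈ A, ∀ j, |C s a j| ≤ Cbar * w s)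
    (hdrift : ∀ s ∈ S, ∀ a ∈ A, ∀ j, w (g s a j) ≤ κ * w s)
    (hγκ : γ * κ < 1)
    (Phat rhat : Fin J → ℝ)
    (hboxne : (boxSet J Phat rhat).Nonempty)
    (Ptil rtil : Fin J → ℝ)
    (hboxne' : (boxSet J Ptil rtil).Nonempty)
    (Vhat : (Fin m → ℝ) → ℝ) (hVhatBd : ∃ M, ∀ s ∈ S, |Vhat s| ≤ M * w s)
    (hVhatFix : ∀ s ∈ S, Vhat s = robustBellman A (boxSet J Phat rhat) C g γ Vhat s)
    (Vtil : (Fin m → ℝ) → ℝ) (hVtilBd : ∃ M, ∀ s ∈ S, |Vtil s| ≤ M * w s)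
    (hVtilFix : ∀ s ∈ S, Vtil s = robustBellman A (boxSet J Ptil rtil) C g γ Vtil s)
    (sbar : Fin m → ℝ) (hsbar : sbar ∈ S)
    -- the nominal and perturbed robust optimal action sets at `sbar`
    (Ahat Atil : Set (Fin n → ℝ))
    (hAtil : Atil = {a ∈ A | ∀ a' ∈ A,
        (⨆ Q : boxSet J Ptil rtil, expec (Q : Fin J → ℝ)
            (fun j => C sbar a j + γ * Vtil (g sbar a j))) ≤
        (⨆ Q : boxSet J Ptil rtil, expec (Q : Fin J → ℝ)
            (fun j => C sbar a' j + γ * Vtil (g sbar a' j)))})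
    -- second-order growth condition at the nominal optimal action set
    (ν : ℝ) (hν : 0 < ν)
    (hgrowth : ∀ a ∈ A,
      Vhat sbar + ν * (eDistSet a Ahat) ^ 2 ≤
        ⨆ Q : boxSet J Phat rhat, expec (Q : Fin J → ℝ)
          (fun j => C sbar a j + γ * Vhat (g sbar a j))) :
    excessD (fun a b => eDist a b) Atil Ahat ≤
      Real.sqrt ((3 * Cbar * w sbar / (ν * (1 - γ * κ) ^ 2)) *
        hausD dTV (boxSet J Phat rhat) (boxSet J Ptil rtil)) := by
  have hW : WeightedBounds S A C g w Cbar κ := ⟨hw1, hCb, hdrift, hgS⟩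
  have hbox (P r : Fin J → ℝ) : boxSet J P r ⊆ stdSimplex ℝ (Fin J) := fun _ hQ => hQ.1
  have hfix : IsWeightedFixedPt S A (boxSet J Phat rhat) C g γ w Vhat := ⟨hVhatBd, hVhatFix⟩
  have hfix' : IsWeightedFixedPt S A (boxSet J Ptil rtil) C g γ w Vtil := ⟨hVtilBd, hVtilFix⟩
  set E := Cbar * hausD dTV (boxSet J Phat rhat) (boxSet J Ptil rtil) / (1 - γ * κ) ^ 2
  have hE : 0 ≤ E * w sbar := mul_nonneg (div_nonneg (mul_nonneg hCbar0.le
    (hausD_nonneg dTV_nonneg)) (sq_nonneg _)) (hW.weight_pos hsbar).le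
  have hvalue := hW.abs_sub_le_of_isWeightedFixedPt hA (hbox _ _) (hbox _ _) hboxne hboxne'
    hCbar0.le hγ0 hκ0 hγκ hfix hfix' sbar hsbar
  refine Real.iSup_le (fun ⟨b, hb⟩ => ?_) (Real.sqrt_nonneg _)
  rw [hAtil] at hb
  have hqvalue := hW.abs_robustQValue_sub_robustQValue_le_of_isWeightedFixedPt hA (hbox _ _)
    (hbox _ _) hboxne hboxne' hCbar0.le hγ0 hκ0 hγκ hfix hfix' hsbar hb.1
  have hmin : robustQValue (boxSet J Ptil rtil) C g γ Vtil sbar b = Vtil sbar := by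
    rw [hVtilFix sbar hsbar, robustBellman_eq_iInf_robustQValue,
      IsMinOn.iInf_eq (f := robustQValue (boxSet J Ptil rtil) C g γ Vtil sbar) hb.1 hb.2]
  have hgrow : Vhat sbar + ν * eDistSet b Ahat ^ 2 ≤
      robustQValue (boxSet J Phat rhat) C g γ Vhat sbar b := hgrowth b hb.1
  have hsq : eDistSet b Ahat ^ 2 ≤ 2 * (E * w sbar) / ν := by
    rw [le_div_iff₀ hν]
    linarith [(abs_le.1 hvalue).1, (abs_le.1 hqvalue).2]
  refine (le_abs_self _).trans (Real.abs_le_sqrt (hsq.trans ?_))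
  calc 2 * (E * w sbar) / ν ≤ 3 * (E * w sbar) / ν := by gcongr; norm_num
    _ = _ := by simp only [E]; field_simp

/-- quantitative stability of the robust optimal action set at `sbar`
under a second-order growth condition. -/
theorem robust_policy_stability_quantitative
    (J m n : ℕ) (hJ : 2 ≤ J)
    (S : Set (Fin m → ℝ)) (hS : S.Nonempty) (hScl : IsClosed S)
    (A : Set (Fin n → ℝ)) (hA : A.Nonempty) (hAcp : IsCompact A)
    (C : (Fin m → ℝ) → (Fin n → ℝ) → Fin J → ℝ)
    (g : (Fin m → ℝ) → (Fin n → ℝ) → Fin J → Fin m → ℝ)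
    (hCcont : ∀ j, ContinuousOn (fun p : (Fin m → ℝ) × (Fin n → ℝ) => C p.1 p.2 j) (S ×ˢ A))
    (hgcont : ∀ j, ContinuousOn (fun p : (Fin m → ℝ) × (Fin n → ℝ) => g p.1 p.2 j) (S ×ˢ A))
    (hgS : ∀ s ∈ S, ∀ a ∈ A, ∀ j, g s a j ∈ S)
    (γ : ℝ) (hγ0 : 0 ≤ γ) (hγ1 : γ < 1)
    (w : (Fin m → ℝ) → ℝ) (hw1 : ∀ s ∈ S, 1 ≤ w s) (hwcont : ContinuousOn w S)
    (Cbar κ : ℝ) (hCbar0 : 0 < Cbar) (hκ0 : 0 ≤ κ)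
    (hCb : ∀ s ∈ S, ∀ a ∈ A, ∀ j, |C s a j| ≤ Cbar * w s)
    (hdrift : ∀ s ∈ S, ∀ a ∈ A, ∀ j, w (g s a j) ≤ κ * w s)
    (hγκ : γ * κ < 1)
    (Phat rhat : Fin J → ℝ) (hPhat : Phat ∈ stdSimplex ℝ (Fin J)) (hrhat : ∀ j, 0 ≤ rhat j)
    (hboxne : (boxSet J Phat rhat).Nonempty)
    (Ptil rtil : Fin J → ℝ) (hPtil : Ptil ∈ stdSimplex ℝ (Fin J)) (hrtil : ∀ j, 0 ≤ rtil j)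
    (hboxne' : (boxSet J Ptil rtil).Nonempty)
    (Vhat : (Fin m → ℝ) → ℝ) (hVhatBd : ∃ M, ∀ s ∈ S, |Vhat s| ≤ M * w s)
    (hVhatFix : ∀ s ∈ S, Vhat s = robustBellman A (boxSet J Phat rhat) C g γ Vhat s)
    (Vtil : (Fin m → ℝ) → ℝ) (hVtilBd : ∃ M, ∀ s ∈ S, |Vtil s| ≤ M * w s)
    (hVtilFix : ∀ s ∈ S, Vtil s = robustBellman A (boxSet J Ptil rtil) C g γ Vtil s)
    (sbar : Fin m → ℝ) (hsbar : sbar ∈ S)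
    -- the nominal and perturbed robust optimal action sets at `sbar`
    (Ahat Atil : Set (Fin n → ℝ))
    (hAhat : Ahat = {a ∈ A | ∀ a' ∈ A,
        (⨆ Q : boxSet J Phat rhat, expec (Q : Fin J → ℝ)
            (fun j => C sbar a j + γ * Vhat (g sbar a j))) ≤
        (⨆ Q : boxSet J Phat rhat, expec (Q : Fin J → ℝ)
            (fun j => C sbar a' j + γ * Vhat (g sbar a' j)))})
    (hAtil : Atil = {a ∈ A | ∀ a' ∈ A,
        (⨆ Q : boxSet J Ptil rtil, expec (Q : Fin J → ℝ)
            (fun j => C sbar a j + γ * Vtil (g sbar a j))) ≤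
        (⨆ Q : boxSet J Ptil rtil, expec (Q : Fin J → ℝ)
            (fun j => C sbar a' j + γ * Vtil (g sbar a' j)))})
    -- second-order growth condition at the nominal optimal action set
    (ν : ℝ) (hν : 0 < ν)
    (hgrowth : ∀ a ∈ A,
      Vhat sbar + ν * (eDistSet a Ahat) ^ 2 ≤
        ⨆ Q : boxSet J Phat rhat, expec (Q : Fin J → ℝ)
          (fun j => C sbar a j + γ * Vhat (g sbar a j))) :
    excessD (fun a b => eDist a b) Atil Ahat ≤
      Real.sqrt ((3 * Cbar * w sbar / (ν * (1 - γ * κ) ^ 2)) *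
        hausD dTV (boxSet J Phat rhat) (boxSet J Ptil rtil)) :=
  robust_policy_stability_quantitative_general J m n S A hA C g hgS γ hγ0 w hw1 Cbar κ hCbar0 hκ0
    hCb hdrift hγκ Phat rhat hboxne Ptil rtil hboxne' Vhat hVhatBd hVhatFix Vtil hVtilBd hVtilFix
    sbar hsbar Ahat Atil hAtil ν hν hgrowth
end
end

section
/- Consider the bounded-cost setup on a compact state space with robust Bellman operator L̂ (a monotone γ-contraction in the sup norm with unique fixed point V̂*). Let V̲^0 ≡ −C̄/(1−γ) and suppose that for each k ≥ 0 there is a continuous function ℓ_{k+1} : S → ℝ and a trial point s̄_k ∈ S such that ℓ_{k+1} ≤ L̂(V̲^k) pointwise on S and ℓ_{k+1}(s̄_k) = (L̂ V̲^k)(s̄_k), and define V̲^{k+1} := max(V̲^k, ℓ_{k+1}). Assume: (i) the trial points are dense, i.e., for every s ∈ S, ε > 0 and K ∈ ℕ there exists k ≥ K with ‖s̄_k − s‖ < ε; and (ii) the pointwise limit V̲^∞ := lim_k V̲^k is continuous on S. Then V̲^k(s) increases to V̂*(s) for every s ∈ S and ‖V̲^k − V̂*‖_∞ → 0 as k → ∞.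 -/
open Filter Topology

noncomputable section

/-! The lower approximations increase (each update is a `max`) and stay below `V̂*`, because every
iterate is a subsolution `V̲ᵏ ≤ L̂ V̲ᵏ` and the contraction gives a comparison principle between
bounded sub- and supersolutions. Dini's theorem upgrades the pointwise convergence to uniform
convergence, and then tightness at the dense trial points, together with the uniform continuity
of `L̂ V̲^∞`, shows that the limit is a supersolution `L̂ V̲^∞ ≤ V̲^∞`. The comparison principle
gives `V̂* ≤ V̲^∞`, so the limit is `V̂*`. -/

section Expectation

variable {J : ℕ} {Q h h' : Fin J → ℝ}

lemma expec_mono (hQ : Q ∈ stdSimplex ℝ (Fin J)) (hh : ∀ j, h j ≤ h' j) :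
    expec Q h ≤ expec Q h' :=
  Finset.sum_le_sum fun j _ => mul_le_mul_of_nonneg_left (hh j) (hQ.1 j)

lemma expec_const (hQ : Q ∈ stdSimplex ℝ (Fin J)) (c : ℝ) : expec Q (fun _ => c) = c := by
  simp only [expec, ← Finset.sum_mul, hQ.2, one_mul]

lemma expec_add_const (hQ : Q ∈ stdSimplex ℝ (Fin J)) (c : ℝ) :
    expec Q (fun j => h j + c) = expec Q h + c := by
  simp only [expec, mul_add, Finset.sum_add_distrib, ← Finset.sum_mul, hQ.2, one_mul]

lemma expec_le_add_of_le_add (hQ : Q ∈ stdSimplex ℝ (Fin J)) {e : ℝ}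
    (hh : ∀ j, h j ≤ h' j + e) : expec Q h ≤ expec Q h' + e :=
  (expec_mono hQ hh).trans_eq (expec_add_const hQ e)

lemma le_expec_of_le (hQ : Q ∈ stdSimplex ℝ (Fin J)) {c : ℝ} (hh : ∀ j, c ≤ h j) :
    c ≤ expec Q h :=
  (expec_const hQ c).symm.trans_le (expec_mono hQ hh)

lemma expec_le_of_le (hQ : Q ∈ stdSimplex ℝ (Fin J)) {c : ℝ} (hh : ∀ j, h j ≤ c) :
    expec Q h ≤ c :=
  (expec_mono hQ hh).trans_eq (expec_const hQ c)

end Expectation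

section InfSup

variable {J : ℕ} {amb : Set (Fin J → ℝ)} {ι : Type*} [Nonempty ι] {h h' : ι → Fin J → ℝ}

-- The bounds make the real `⨆`/`⨅` genuine suprema and infima, not the junk value `0`.
lemma iInf_iSup_expec_le_add (hamb : amb.Nonempty) (hsimp : amb ⊆ stdSimplex ℝ (Fin J))
    {M M' e : ℝ} (hM : ∀ i j, |h i j| ≤ M) (hM' : ∀ i j, h' i j ≤ M')
    (hle : ∀ i j, h i j ≤ h' i j + e) :
    ⨅ i, ⨆ Q : amb, expec (Q : Fin J → ℝ) (h i) ≤
      (⨅ i, ⨆ Q : amb, expec (Q : Fin J → ℝ) (h' i)) + e := by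
  obtain ⟨Q₀, hQ₀⟩ := hamb
  have hbdd : ∀ i, BddAbove (Set.range fun Q : amb => expec (Q : Fin J → ℝ) (h i)) :=
    fun i => ⟨M, Set.forall_mem_range.2 fun Q =>
      expec_le_of_le (hsimp Q.2) fun j => le_of_abs_le (hM i j)⟩
  have hbdd' : ∀ i, BddAbove (Set.range fun Q : amb => expec (Q : Fin J → ℝ) (h' i)) :=
    fun i => ⟨M', Set.forall_mem_range.2 fun Q => expec_le_of_le (hsimp Q.2) (hM' i)⟩
  have hbddBelow : BddBelow (Set.range fun i => ⨆ Q : amb, expec (Q : Fin J → ℝ) (h i)) :=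
    ⟨-M, Set.forall_mem_range.2 fun i =>
      (le_expec_of_le (hsimp hQ₀) fun j => neg_le_of_abs_le (hM i j)).trans
        (le_ciSup (hbdd i) ⟨Q₀, hQ₀⟩)⟩
  have : Nonempty amb := ⟨⟨Q₀, hQ₀⟩⟩
  rw [← sub_le_iff_le_add]
  refine le_ciInf fun i => sub_le_iff_le_add.2 <| (ciInf_le hbddBelow i).trans <|
    ciSup_le fun Q => ?_
  exact (expec_le_add_of_le_add (hsimp Q.2) (hle i)).trans
    (add_le_add (le_ciSup (hbdd' i) Q) le_rfl)

lemma le_iInf_iSup_expec (hamb : amb.Nonempty) (hsimp : amb ⊆ stdSimplex ℝ (Fin J))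
    {M c : ℝ} (hM : ∀ i j, h i j ≤ M) (hc : ∀ i j, c ≤ h i j) :
    c ≤ ⨅ i, ⨆ Q : amb, expec (Q : Fin J → ℝ) (h i) := by
  obtain ⟨Q₀, hQ₀⟩ := hamb
  have hbdd : ∀ i, BddAbove (Set.range fun Q : amb => expec (Q : Fin J → ℝ) (h i)) :=
    fun i => ⟨M, Set.forall_mem_range.2 fun Q => expec_le_of_le (hsimp Q.2) (hM i)⟩
  exact le_ciInf fun i => (le_expec_of_le (hsimp hQ₀) (hc i)).trans (le_ciSup (hbdd i) ⟨Q₀, hQ₀⟩)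

end InfSup

lemma nonpos_of_forall_le_mul_of_forall_le {X : Type*} {S : Set X} {f : X → ℝ} {γ : ℝ}
    (hγ : γ < 1) (hf : BddAbove (f '' S))
    (h : ∀ d, (∀ x ∈ S, f x ≤ d) → ∀ x ∈ S, f x ≤ γ * d) : ∀ x ∈ S, f x ≤ 0 := by
  intro x hx
  have hsup : ∀ y ∈ S, f y ≤ sSup (f '' S) := fun y hy => le_csSup hf (Set.mem_image_of_mem f hy)
  have hle : sSup (f '' S) ≤ γ * sSup (f '' S) :=
    csSup_le ⟨_, Set.mem_image_of_mem f hx⟩ <| by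
      rintro _ ⟨y, hy, rfl⟩
      exact h _ hsup y hy
  nlinarith [hsup x hx]

lemma IsCompact.exists_abs_le_of_continuousOn {X : Type*} [TopologicalSpace X] {S : Set X}
    (hS : IsCompact S) {f : X → ℝ} (hf : ContinuousOn f S) : ∃ M, ∀ x ∈ S, |f x| ≤ M := by
  simpa only [Real.norm_eq_abs] using hS.exists_bound_of_continuousOn hf

lemma tendsto_iSup_abs_sub_of_tendstoUniformlyOn {ι X : Type*} {l : Filter ι} {S : Set X}
    {F : ι → X → ℝ} {f : X → ℝ} (h : TendstoUniformlyOn F f l S) :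
    Tendsto (fun k => ⨆ x : S, |F k (x : X) - f x|) l (𝓝 0) := by
  refine Metric.tendsto_nhds.2 fun ε hε => ?_
  filter_upwards [Metric.tendstoUniformlyOn_iff.1 h (ε / 2) (half_pos hε)] with k hk
  have hsup : (⨆ x : S, |F k (x : X) - f x|) ≤ ε / 2 :=
    Real.iSup_le (fun x => by simpa only [Real.dist_eq, abs_sub_comm] using (hk x x.2).le)
      (half_pos hε).le
  rw [Real.dist_eq, sub_zero, abs_of_nonneg (Real.iSup_nonneg fun _ => abs_nonneg _)]
  exact hsup.trans_lt (half_lt_self hε)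

lemma continuousOn_of_succ_eq_max {X : Type*} [TopologicalSpace X] {S : Set X}
    {F G : ℕ → X → ℝ} (h0 : ContinuousOn (F 0) S) (hG : ∀ k, ContinuousOn (G (k + 1)) S)
    (hF : ∀ k, ∀ x ∈ S, F (k + 1) x = max (F k x) (G (k + 1) x)) :
    ∀ k, ContinuousOn (F k) S
  | 0 => h0
  | k + 1 => ContinuousOn.congr (ContinuousOn.sup (continuousOn_of_succ_eq_max h0 hG hF k) (hG k))
      (hF k)

section RobustBellman

variable {J m n : ℕ} {S : Set (Fin m → ℝ)} {A : Set (Fin n → ℝ)} {amb : Set (Fin J → ℝ)}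
  {C : (Fin m → ℝ) → (Fin n → ℝ) → Fin J → ℝ}
  {g : (Fin m → ℝ) → (Fin n → ℝ) → Fin J → Fin m → ℝ} {γ Cbar : ℝ}
  {Vlow : ℕ → (Fin m → ℝ) → ℝ}

lemma abs_add_mul_le_of_abs_le {V : (Fin m → ℝ) → ℝ} {M : ℝ}
    (hCb : ∀ s ∈ S, ∀ a ∈ A, ∀ j, |C s a j| ≤ Cbar) (hgS : ∀ s ∈ S, ∀ a ∈ A, ∀ j, g s a j ∈ S)
    (hV : ∀ x ∈ S, |V x| ≤ M) {s : Fin m → ℝ} (hs : s ∈ S) {a : Fin n → ℝ} (ha : a ∈ A)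
    (j : Fin J) : |C s a j + γ * V (g s a j)| ≤ Cbar + |γ| * M := by
  refine (abs_add_le _ _).trans (add_le_add (hCb s hs a ha j) ?_)
  rw [abs_mul]
  exact mul_le_mul_of_nonneg_left (hV _ (hgS s hs a ha j)) (abs_nonneg γ)

lemma robustBellman_le_add_mul (hA : A.Nonempty) (hamb : amb.Nonempty)
    (hsimp : amb ⊆ stdSimplex ℝ (Fin J)) (hCb : ∀ s ∈ S, ∀ a ∈ A, ∀ j, |C s a j| ≤ Cbar)
    (hgS : ∀ s ∈ S, ∀ a ∈ A, ∀ j, g s a j ∈ S) (hγ : 0 ≤ γ) {V V' : (Fin m → ℝ) → ℝ}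
    (hV : ∃ M, ∀ x ∈ S, |V x| ≤ M) (hV' : ∃ M, ∀ x ∈ S, |V' x| ≤ M) {d : ℝ}
    (hle : ∀ x ∈ S, V x ≤ V' x + d) {s : Fin m → ℝ} (hs : s ∈ S) :
    robustBellman A amb C g γ V s ≤ robustBellman A amb C g γ V' s + γ * d := by
  obtain ⟨M, hM⟩ := hV
  obtain ⟨M', hM'⟩ := hV'
  have := hA.to_subtype
  refine iInf_iSup_expec_le_add hamb hsimp
    (fun a j => abs_add_mul_le_of_abs_le hCb hgS hM hs a.2 j)
    (fun a j => le_of_abs_le (abs_add_mul_le_of_abs_le hCb hgS hM' hs a.2 j)) fun a j => ?_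
  have := mul_le_mul_of_nonneg_left (hle _ (hgS s hs a a.2 j)) hγ
  linarith

lemma le_robustBellman_of_eq_neg_div (hA : A.Nonempty) (hamb : amb.Nonempty)
    (hsimp : amb ⊆ stdSimplex ℝ (Fin J)) (hCb : ∀ s ∈ S, ∀ a ∈ A, ∀ j, |C s a j| ≤ Cbar)
    (hgS : ∀ s ∈ S, ∀ a ∈ A, ∀ j, g s a j ∈ S) (hγ1 : γ < 1) {V : (Fin m → ℝ) → ℝ}
    (hV : ∀ x ∈ S, V x = -Cbar / (1 - γ)) {s : Fin m → ℝ} (hs : s ∈ S) :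
    V s ≤ robustBellman A amb C g γ V s := by
  have := hA.to_subtype
  have hfix : -Cbar + γ * (-Cbar / (1 - γ)) = -Cbar / (1 - γ) := by
    field_simp [(sub_pos.2 hγ1).ne']
    ring
  rw [hV s hs, ← hfix]
  refine le_iInf_iSup_expec hamb hsimp (M := Cbar + γ * (-Cbar / (1 - γ))) ?_ ?_ <;>
    intro a j <;> rw [hV _ (hgS s hs a a.2 j)]
  · linarith [le_of_abs_le (hCb s hs a a.2 j)]
  · linarith [neg_le_of_abs_le (hCb s hs a a.2 j)]

lemma le_of_le_robustBellman_of_robustBellman_le (hA : A.Nonempty) (hamb : amb.Nonempty)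
    (hsimp : amb ⊆ stdSimplex ℝ (Fin J)) (hCb : ∀ s ∈ S, ∀ a ∈ A, ∀ j, |C s a j| ≤ Cbar)
    (hgS : ∀ s ∈ S, ∀ a ∈ A, ∀ j, g s a j ∈ S) (hγ0 : 0 ≤ γ) (hγ1 : γ < 1)
    {W₁ W₂ : (Fin m → ℝ) → ℝ} (hW₁ : ∃ M, ∀ x ∈ S, |W₁ x| ≤ M) (hW₂ : ∃ M, ∀ x ∈ S, |W₂ x| ≤ M)
    (hsub : ∀ s ∈ S, W₁ s ≤ robustBellman A amb C g γ W₁ s)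
    (hsuper : ∀ s ∈ S, robustBellman A amb C g γ W₂ s ≤ W₂ s) :
    ∀ s ∈ S, W₁ s ≤ W₂ s := by
  obtain ⟨M₁, hM₁⟩ := hW₁
  obtain ⟨M₂, hM₂⟩ := hW₂
  have hbdd : BddAbove ((fun x => W₁ x - W₂ x) '' S) := by
    refine ⟨M₁ + M₂, ?_⟩
    rintro _ ⟨x, hx, rfl⟩
    linarith [le_of_abs_le (hM₁ x hx), neg_le_of_abs_le (hM₂ x hx)]
  have key := nonpos_of_forall_le_mul_of_forall_le hγ1 hbdd fun d hd s hs => by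
    have := robustBellman_le_add_mul hA hamb hsimp hCb hgS hγ0 ⟨M₁, hM₁⟩ ⟨M₂, hM₂⟩
      (fun x hx => sub_le_iff_le_add'.1 (hd x hx)) hs
    linarith [hsub s hs, hsuper s hs]
  exact fun s hs => sub_nonpos.1 (key s hs)

lemma exists_robustBellman_le_add_of_dist_lt (hS : IsCompact S) (hAc : IsCompact A)
    (hA : A.Nonempty) (hamb : amb.Nonempty) (hsimp : amb ⊆ stdSimplex ℝ (Fin J))
    (hCcont : ∀ j, ContinuousOn (fun p : (Fin m → ℝ) × (Fin n → ℝ) => C p.1 p.2 j) (S ×ˢ A))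
    (hgcont : ∀ j, ContinuousOn (fun p : (Fin m → ℝ) × (Fin n → ℝ) => g p.1 p.2 j) (S ×ˢ A))
    (hgS : ∀ s ∈ S, ∀ a ∈ A, ∀ j, g s a j ∈ S) {V : (Fin m → ℝ) → ℝ} (hV : ContinuousOn V S)
    {ε : ℝ} (hε : 0 < ε) :
    ∃ δ > 0, ∀ s ∈ S, ∀ s' ∈ S, dist s s' < δ →
      robustBellman A amb C g γ V s ≤ robustBellman A amb C g γ V s' + ε := by
  set F : (Fin m → ℝ) × (Fin n → ℝ) → Fin J → ℝ := fun p j => C p.1 p.2 j + γ * V (g p.1 p.2 j)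
  have hF : ContinuousOn F (S ×ˢ A) := continuousOn_pi.2 fun j =>
    (hCcont j).add (continuousOn_const.mul (hV.comp (hgcont j) fun p hp => hgS _ hp.1 _ hp.2 j))
  obtain ⟨M, hM⟩ := (hS.prod hAc).exists_bound_of_continuousOn hF
  obtain ⟨δ, hδ, hFδ⟩ :=
    Metric.uniformContinuousOn_iff.1 ((hS.prod hAc).uniformContinuousOn_of_continuous hF) ε hε
  refine ⟨δ, hδ, fun s hs s' hs' hss' => ?_⟩
  have := hA.to_subtype
  have hbound : ∀ x ∈ S, ∀ a : A, ∀ j, |F (x, a) j| ≤ M := fun x hx a j =>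
    (norm_le_pi_norm (F (x, a)) j).trans (hM _ ⟨hx, a.2⟩)
  refine iInf_iSup_expec_le_add hamb hsimp (hbound s hs) (fun a j => le_of_abs_le
    (hbound s' hs' a j)) fun a j => ?_
  have hdist : dist ((s, a) : (Fin m → ℝ) × (Fin n → ℝ)) (s', a) < δ := by
    rwa [Prod.dist_eq, dist_self, max_eq_left dist_nonneg]
  have hj := (dist_le_pi_dist _ _ j).trans_lt (hFδ _ ⟨hs, a.2⟩ _ ⟨hs', a.2⟩ hdist)
  rw [Real.dist_eq] at hj
  linarith [(abs_lt.1 hj).2]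

lemma le_robustBellman_of_succ_eq_max (hA : A.Nonempty) (hamb : amb.Nonempty)
    (hsimp : amb ⊆ stdSimplex ℝ (Fin J)) (hCb : ∀ s ∈ S, ∀ a ∈ A, ∀ j, |C s a j| ≤ Cbar)
    (hgS : ∀ s ∈ S, ∀ a ∈ A, ∀ j, g s a j ∈ S) (hγ : 0 ≤ γ) {cut : ℕ → (Fin m → ℝ) → ℝ}
    (hbd : ∀ k, ∃ M, ∀ x ∈ S, |Vlow k x| ≤ M)
    (h0 : ∀ s ∈ S, Vlow 0 s ≤ robustBellman A amb C g γ (Vlow 0) s)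
    (hcut : ∀ k, ∀ s ∈ S, cut (k + 1) s ≤ robustBellman A amb C g γ (Vlow k) s)
    (hupd : ∀ k, ∀ s ∈ S, Vlow (k + 1) s = max (Vlow k s) (cut (k + 1) s)) :
    ∀ k, ∀ s ∈ S, Vlow k s ≤ robustBellman A amb C g γ (Vlow k) s := by
  intro k
  induction k with
  | zero => exact h0
  | succ k ih =>
    intro s hs
    have hmono : robustBellman A amb C g γ (Vlow k) s ≤
        robustBellman A amb C g γ (Vlow (k + 1)) s := by
      simpa using robustBellman_le_add_mul hA hamb hsimp hCb hgS hγ (hbd k) (hbd (k + 1))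
        (d := 0) (fun x hx => by rw [hupd k x hx, add_zero]; exact le_max_left _ _) hs
    rw [hupd k s hs]
    exact max_le ((ih s hs).trans hmono) ((hcut k s hs).trans hmono)

lemma robustBellman_le_of_tendstoUniformlyOn (hS : IsCompact S) (hAc : IsCompact A)
    (hA : A.Nonempty) (hamb : amb.Nonempty) (hsimp : amb ⊆ stdSimplex ℝ (Fin J))
    (hCb : ∀ s ∈ S, ∀ a ∈ A, ∀ j, |C s a j| ≤ Cbar)
    (hCcont : ∀ j, ContinuousOn (fun p : (Fin m → ℝ) × (Fin n → ℝ) => C p.1 p.2 j) (S ×ˢ A))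
    (hgcont : ∀ j, ContinuousOn (fun p : (Fin m → ℝ) × (Fin n → ℝ) => g p.1 p.2 j) (S ×ˢ A))
    (hgS : ∀ s ∈ S, ∀ a ∈ A, ∀ j, g s a j ∈ S) (hγ : 0 ≤ γ) {W : (Fin m → ℝ) → ℝ}
    (hVcont : ∀ k, ContinuousOn (Vlow k) S) (hW : ContinuousOn W S)
    (hunif : TendstoUniformlyOn Vlow W atTop S) {sbar : ℕ → Fin m → ℝ} (hsbarS : ∀ k, sbar k ∈ S)
    (hdense : ∀ s ∈ S, ∀ ε > (0 : ℝ), ∀ K : ℕ, ∃ k ≥ K, ‖sbar k - s‖ < ε)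
    (htrial : ∀ k, robustBellman A amb C g γ (Vlow k) (sbar k) ≤ W (sbar k)) :
    ∀ s ∈ S, robustBellman A amb C g γ W s ≤ W s := by
  intro s hs
  refine le_of_forall_pos_le_add fun ε hε => ?_
  set η := ε / (2 + γ)
  have hη : 0 < η := div_pos hε (by linarith)
  have hηε : η + γ * η + η = ε := by
    simp only [η]
    field_simp
    ring
  obtain ⟨δ₁, hδ₁, hmod⟩ :=
    exists_robustBellman_le_add_of_dist_lt hS hAc hA hamb hsimp hCcont hgcont hgS hW hη
  obtain ⟨δ₂, hδ₂, hWs⟩ := Metric.continuousWithinAt_iff.1 (hW s hs) η hη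
  obtain ⟨K, hK⟩ := eventually_atTop.1 (Metric.tendstoUniformlyOn_iff.1 hunif η hη)
  obtain ⟨k, hkK, hk⟩ := hdense s hs _ (lt_min hδ₁ hδ₂) K
  rw [← dist_eq_norm] at hk
  have e1 := hmod s hs (sbar k) (hsbarS k) (by rw [dist_comm]; exact hk.trans_le (min_le_left _ _))
  have e2 := robustBellman_le_add_mul hA hamb hsimp hCb hgS hγ
    (hS.exists_abs_le_of_continuousOn hW) (hS.exists_abs_le_of_continuousOn (hVcont k)) (d := η)
    (fun x hx => by
      have := hK k hkK x hx
      rw [Real.dist_eq] at this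
      linarith [le_abs_self (W x - Vlow k x)])
    (hsbarS k)
  have e3 := hWs (hsbarS k) (hk.trans_le (min_le_right _ _))
  rw [Real.dist_eq] at e3
  linarith [htrial k, (abs_lt.1 e3).2]

end RobustBellman

theorem bocp_convergence_general
    (J m n : ℕ)
    (S : Set (Fin m → ℝ)) (hScp : IsCompact S)
    (A : Set (Fin n → ℝ)) (hA : A.Nonempty) (hAcp : IsCompact A)
    (C : (Fin m → ℝ) → (Fin n → ℝ) → Fin J → ℝ)
    (g : (Fin m → ℝ) → (Fin n → ℝ) → Fin J → Fin m → ℝ)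
    (hCcont : ∀ j, ContinuousOn (fun p : (Fin m → ℝ) × (Fin n → ℝ) => C p.1 p.2 j) (S ×ˢ A))
    (hgcont : ∀ j, ContinuousOn (fun p : (Fin m → ℝ) × (Fin n → ℝ) => g p.1 p.2 j) (S ×ˢ A))
    (hgS : ∀ s ∈ S, ∀ a ∈ A, ∀ j, g s a j ∈ S)
    (γ : ℝ) (hγ0 : 0 ≤ γ) (hγ1 : γ < 1)
    (Cbar : ℝ)
    (hCb : ∀ s ∈ S, ∀ a ∈ A, ∀ j, |C s a j| ≤ Cbar)
    (Phat rhat : Fin J → ℝ)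
    (hboxne : (boxSet J Phat rhat).Nonempty)
    (Vhat : (Fin m → ℝ) → ℝ) (hVhatBd : ∃ M, ∀ s ∈ S, |Vhat s| ≤ M)
    (hVhatFix : ∀ s ∈ S, Vhat s = robustBellman A (boxSet J Phat rhat) C g γ Vhat s)
    (Vlow : ℕ → (Fin m → ℝ) → ℝ) (cut : ℕ → (Fin m → ℝ) → ℝ)
    (hV0 : ∀ s ∈ S, Vlow 0 s = -Cbar / (1 - γ))
    (hcutCont : ∀ k, ContinuousOn (cut (k + 1)) S)
    (hcut : ∀ k, ∀ s ∈ S,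
      cut (k + 1) s ≤ robustBellman A (boxSet J Phat rhat) C g γ (Vlow k) s)
    (hupd : ∀ k, ∀ s ∈ S, Vlow (k + 1) s = max (Vlow k s) (cut (k + 1) s))
    -- trial points at which the cuts are tight
    (sbar : ℕ → Fin m → ℝ) (hsbarS : ∀ k, sbar k ∈ S)
    (htight : ∀ k,
      cut (k + 1) (sbar k) = robustBellman A (boxSet J Phat rhat) C g γ (Vlow k) (sbar k))
    -- (i) density of the trial points in `S`
    (hdense : ∀ s ∈ S, ∀ ε > (0 : ℝ), ∀ K : ℕ, ∃ k ≥ K, ‖sbar k - s‖ < ε)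
    -- (ii) the pointwise limit exists and is continuous on `S`
    (Vinf : (Fin m → ℝ) → ℝ)
    (hVinf : ∀ s ∈ S, Tendsto (fun k => Vlow k s) atTop (𝓝 (Vinf s)))
    (hVinfCont : ContinuousOn Vinf S) :
    (∀ s ∈ S, (Monotone fun k => Vlow k s) ∧
      Tendsto (fun k => Vlow k s) atTop (𝓝 (Vhat s))) ∧
    Tendsto (fun k => ⨆ s : S, |Vlow k (s : Fin m → ℝ) - Vhat (s : Fin m → ℝ)|)
      atTop (𝓝 0) := by
  have hsimp : boxSet J Phat rhat ⊆ stdSimplex ℝ (Fin J) := fun _ hQ => hQ.1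
  have hmono : ∀ s ∈ S, Monotone fun k => Vlow k s := fun s hs =>
    monotone_nat_of_le_succ fun k => (hupd k s hs).symm ▸ le_max_left _ _
  have hcont : ∀ k, ContinuousOn (Vlow k) S :=
    continuousOn_of_succ_eq_max (continuousOn_const.congr hV0) hcutCont hupd
  have hbd : ∀ k, ∃ M, ∀ x ∈ S, |Vlow k x| ≤ M :=
    fun k => hScp.exists_abs_le_of_continuousOn (hcont k)
  have hunif : TendstoUniformlyOn Vlow Vinf atTop S :=
    Monotone.tendstoUniformlyOn_of_forall_tendsto hScp hcont hmono hVinfCont hVinf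
  have hsub := le_robustBellman_of_succ_eq_max hA hboxne hsimp hCb hgS hγ0 hbd
    (fun s hs => le_robustBellman_of_eq_neg_div hA hboxne hsimp hCb hgS hγ1 hV0 hs) hcut hupd
  have hle : ∀ k, ∀ s ∈ S, Vlow k s ≤ Vhat s := fun k =>
    le_of_le_robustBellman_of_robustBellman_le hA hboxne hsimp hCb hgS hγ0 hγ1 (hbd k) hVhatBd
      (hsub k) fun s hs => (hVhatFix s hs).ge
  have hsuper := robustBellman_le_of_tendstoUniformlyOn hScp hAcp hA hboxne hsimp hCb hCcont
    hgcont hgS hγ0 hcont hVinfCont hunif hsbarS hdense fun k => by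
      rw [← htight k]
      exact ((le_max_right _ _).trans_eq (hupd k _ (hsbarS k)).symm).trans
        ((hmono _ (hsbarS k)).ge_of_tendsto (hVinf _ (hsbarS k)) (k + 1))
  have heq : Set.EqOn Vinf Vhat S := fun s hs => le_antisymm
    (le_of_tendsto' (hVinf s hs) fun k => hle k s hs)
    (le_of_le_robustBellman_of_robustBellman_le hA hboxne hsimp hCb hgS hγ0 hγ1 hVhatBd
      (hScp.exists_abs_le_of_continuousOn hVinfCont) (fun s hs => (hVhatFix s hs).le) hsuper s hs)
  exact ⟨fun s hs => ⟨hmono s hs, heq hs ▸ hVinf s hs⟩,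
    tendsto_iSup_abs_sub_of_tendstoUniformlyOn (hunif.congr_right heq)⟩

/-- convergence of the Bellman-operator cutting-plane algorithm.
With tight supporting cuts generated at a dense sequence of trial points and a
continuous pointwise limit, the lower approximations increase pointwise to the
robust optimal value function and converge uniformly on `S`. -/
theorem bocp_convergence
    (J m n : ℕ) (hJ : 2 ≤ J)
    (S : Set (Fin m → ℝ)) (hS : S.Nonempty) (hScp : IsCompact S)
    (A : Set (Fin n → ℝ)) (hA : A.Nonempty) (hAcp : IsCompact A)
    (C : (Fin m → ℝ) → (Fin n → ℝ) → Fin J → ℝ)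
    (g : (Fin m → ℝ) → (Fin n → ℝ) → Fin J → Fin m → ℝ)
    (hCcont : ∀ j, ContinuousOn (fun p : (Fin m → ℝ) × (Fin n → ℝ) => C p.1 p.2 j) (S ×ˢ A))
    (hgcont : ∀ j, ContinuousOn (fun p : (Fin m → ℝ) × (Fin n → ℝ) => g p.1 p.2 j) (S ×ˢ A))
    (hgS : ∀ s ∈ S, ∀ a ∈ A, ∀ j, g s a j ∈ S)
    (γ : ℝ) (hγ0 : 0 ≤ γ) (hγ1 : γ < 1)
    (Cbar : ℝ) (hCbar0 : 0 ≤ Cbar)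
    (hCb : ∀ s ∈ S, ∀ a ∈ A, ∀ j, |C s a j| ≤ Cbar)
    (Phat rhat : Fin J → ℝ) (hPhat : Phat ∈ stdSimplex ℝ (Fin J)) (hrhat : ∀ j, 0 ≤ rhat j)
    (hboxne : (boxSet J Phat rhat).Nonempty)
    (Vhat : (Fin m → ℝ) → ℝ) (hVhatBd : ∃ M, ∀ s ∈ S, |Vhat s| ≤ M)
    (hVhatFix : ∀ s ∈ S, Vhat s = robustBellman A (boxSet J Phat rhat) C g γ Vhat s)
    (Vlow : ℕ → (Fin m → ℝ) → ℝ) (cut : ℕ → (Fin m → ℝ) → ℝ)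
    (hV0 : ∀ s ∈ S, Vlow 0 s = -Cbar / (1 - γ))
    (hcutCont : ∀ k, ContinuousOn (cut (k + 1)) S)
    (hcut : ∀ k, ∀ s ∈ S,
      cut (k + 1) s ≤ robustBellman A (boxSet J Phat rhat) C g γ (Vlow k) s)
    (hupd : ∀ k, ∀ s ∈ S, Vlow (k + 1) s = max (Vlow k s) (cut (k + 1) s))
    -- trial points at which the cuts are tight
    (sbar : ℕ → Fin m → ℝ) (hsbarS : ∀ k, sbar k ∈ S)
    (htight : ∀ k,
      cut (k + 1) (sbar k) = robustBellman A (boxSet J Phat rhat) C g γ (Vlow k) (sbar k))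
    -- (i) density of the trial points in `S`
    (hdense : ∀ s ∈ S, ∀ ε > (0 : ℝ), ∀ K : ℕ, ∃ k ≥ K, ‖sbar k - s‖ < ε)
    -- (ii) the pointwise limit exists and is continuous on `S`
    (Vinf : (Fin m → ℝ) → ℝ)
    (hVinf : ∀ s ∈ S, Tendsto (fun k => Vlow k s) atTop (𝓝 (Vinf s)))
    (hVinfCont : ContinuousOn Vinf S) :
    (∀ s ∈ S, (Monotone fun k => Vlow k s) ∧
      Tendsto (fun k => Vlow k s) atTop (𝓝 (Vhat s))) ∧
    Tendsto (fun k => ⨆ s : S, |Vlow k (s : Fin m → ℝ) - Vhat (s : Fin m → ℝ)|)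
      atTop (𝓝 0) :=
  bocp_convergence_general J m n S hScp A hA hAcp C g hCcont hgcont hgS γ hγ0 hγ1 Cbar hCb Phat rhat
    hboxne Vhat hVhatBd hVhatFix Vlow cut hV0 hcutCont hcut hupd sbar hsbarS htight hdense Vinf
    hVinf hVinfCont

end
end
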